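/- There exist a finite set M, an additive valuation V, and an entitlement vector t of size n = 2, such that for every i ∈ {1,2} and every pair of positive integers (l,d) with l/d ≤ tᵢ, WMMS(M,t,i) > V(MMS(M,l,d)). Concretely, take M = {a,b} with V(a)=40, V(b)=60 and t = (0.4, 0.6): then WMMS(M,t,1) = 40 > 0 and WMMS(M,t,2) = 60 > 40, while the best MMS bundle for agent 1 is ∅ and for agent 2 is the item of value 40. -/

import Mathlib

open Finset

/-- A partition of the finite type `α` into `d` (possibly empty) pairwise-disjoint parts. -/
def IsPartition {α : Type} [Fintype α] [DecidableEq α] (d : ℕ) (Y : Fin d → Finset α) : Prop :=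
  (∀ i j : Fin d, i ≠ j → Disjoint (Y i) (Y j)) ∧
    Finset.univ.biUnion Y = (Finset.univ : Finset α)

/-- `MMSLe pref l d l' d'` says that the `l`-out-of-`d` maximin share of `α` is at least as good
(w.r.t. `pref`, where `pref A B` means `A ⪰ B`) as the `l'`-out-of-`d'` maximin share:
for every `d'`-partition `Y'` there is a `d`-partition `Y` whose minimal `l`-part union is
`⪰` some `l'`-part union of `Y'` (hence `⪰` the minimal one). -/
def MMSLe {α : Type} [Fintype α] [DecidableEq α]
    (pref : Finset α → Finset α → Prop) (l d l' d' : ℕ) : Prop :=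
  ∀ Y' : Fin d' → Finset α, IsPartition d' Y' →
    ∃ Y : Fin d → Finset α, IsPartition d Y ∧
      ∀ S : Finset (Fin d), S.card = l →
        ∃ S' : Finset (Fin d'), S'.card = l' ∧ pref (S.biUnion Y) (S'.biUnion Y')

/-- The value of the `l`-out-of-`d` maximin share w.r.t. a real-valued valuation `v`. -/
noncomputable def mmsValR {α : Type} [Fintype α] [DecidableEq α]
    (v : Finset α → ℝ) (l d : ℕ) : ℝ :=
  sSup {x | ∃ Y : Fin d → Finset α, IsPartition d Y ∧
    x = sInf {y | ∃ S : Finset (Fin d), S.card = l ∧ y = v (S.biUnion Y)}}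

/-- The weighted maximin share of agent `i` with entitlements `t` (Farhadi et al.):
`tᵢ` times the maximum over `n`-partitions of `minⱼ V(Yⱼ)/tⱼ`. -/
noncomputable def wmms {α : Type} [Fintype α] [DecidableEq α]
    (v : α → ℝ) (n : ℕ) (t : Fin n → ℝ) (i : Fin n) : ℝ :=
  t i * sSup {x | ∃ Y : Fin n → Finset α, IsPartition n Y ∧
    x = ⨅ j, (∑ a ∈ Y j, v a) / t j}

/-!
Give the two items values `40, 60` and the agents entitlements `2/5, 3/5`. Each agent gets exactly
its proportional share `tᵢ · 100` in WMMS by receiving its own item. On the ordinal side, an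
`l`-out-of-`d` share with `l/d ≤ 2/5` leaves at least two parts to avoid, so both items can be
dodged and the share is `0`; with `l/d ≤ 3/5` at least one part can be avoided, namely the one
holding the item of value `60`, so the share is at most `40`.
-/

section Partition

variable {α : Type} [Fintype α] [DecidableEq α] {d : ℕ} {Y : Fin d → Finset α}

theorem IsPartition.exists_mem (hY : IsPartition d Y) (a : α) : ∃ j, a ∈ Y j := by
  have ha : a ∈ univ.biUnion Y := hY.2 ▸ mem_univ a
  simpa using ha

theorem isPartition_singleton (n : ℕ) : IsPartition n (fun j : Fin n => ({j} : Finset (Fin n))) :=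
  ⟨fun i j hij => by simpa using hij, by ext; simp⟩

theorem exists_card_eq_disjoint {ι : Type} [Fintype ι] [DecidableEq ι] {l : ℕ} (A : Finset ι)
    (h : l + #A ≤ Fintype.card ι) : ∃ S : Finset ι, #S = l ∧ Disjoint S A := by
  obtain ⟨S, hSA, hS⟩ := exists_subset_card_eq (s := Aᶜ) (n := l) (by rw [card_compl]; omega)
  exact ⟨S, hS, subset_compl_iff_disjoint_right.mp hSA⟩

/-- Take `l` parts among those, all but at most `#T`, that miss `T`. -/
theorem IsPartition.exists_card_eq_disjoint_biUnion (hY : IsPartition d Y) {l : ℕ}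
    (T : Finset α) (hT : l + #T ≤ d) :
    ∃ S : Finset (Fin d), #S = l ∧ Disjoint (S.biUnion Y) T := by
  choose part hpart using hY.exists_mem
  obtain ⟨S, hS, hSA⟩ := exists_card_eq_disjoint (T.image part)
    (by simpa using (Nat.add_le_add_left card_image_le l).trans hT)
  refine ⟨S, hS, disjoint_left.mpr fun a ha haT => ?_⟩
  obtain ⟨j, hjS, hja⟩ := mem_biUnion.mp ha
  have hj : j ≠ part a := fun h => disjoint_left.mp hSA hjS (h ▸ mem_image_of_mem part haT)
  exact disjoint_left.mp (hY.1 j (part a) hj) hja (hpart a)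

end Partition

section Shares

variable {α : Type} [Fintype α] [DecidableEq α]

theorem mmsValR_le {v : Finset α → ℝ} {l d : ℕ} {C : ℝ} (hC : 0 ≤ C)
    (h : ∀ Y : Fin d → Finset α, IsPartition d Y →
      ∃ S : Finset (Fin d), #S = l ∧ v (S.biUnion Y) ≤ C) :
    mmsValR v l d ≤ C := by
  refine Real.sSup_le ?_ hC
  rintro x ⟨Y, hY, rfl⟩
  obtain ⟨S, hS, hSC⟩ := h Y hY
  have hfin : {y | ∃ S : Finset (Fin d), #S = l ∧ y = v (S.biUnion Y)}.Finite :=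
    (Set.finite_range fun S : Finset (Fin d) => v (S.biUnion Y)).subset
      fun _ ⟨S, _, hy⟩ => ⟨S, hy.symm⟩
  exact (csInf_le hfin.bddBelow ⟨S, hS, rfl⟩).trans hSC

theorem mmsValR_le_sum_compl {v : α → ℝ} (hv : ∀ a, 0 ≤ v a) {l d : ℕ} (T : Finset α)
    (hT : l + #T ≤ d) :
    mmsValR (fun S => ∑ a ∈ S, v a) l d ≤ ∑ a ∈ Tᶜ, v a := by
  refine mmsValR_le (sum_nonneg fun a _ => hv a) fun Y hY => ?_
  obtain ⟨S, hS, hST⟩ := hY.exists_card_eq_disjoint_biUnion T hT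
  exact ⟨S, hS, sum_le_sum_of_subset_of_nonneg (subset_compl_iff_disjoint_right.mpr hST)
    fun a _ _ => hv a⟩

theorem le_wmms {n : ℕ} (v : α → ℝ) (t : Fin n → ℝ) (i : Fin n) (hti : 0 ≤ t i)
    {Y : Fin n → Finset α} (hY : IsPartition n Y) :
    t i * ⨅ j, (∑ a ∈ Y j, v a) / t j ≤ wmms v n t i := by
  unfold wmms
  refine mul_le_mul_of_nonneg_left (le_csSup ?_ ⟨Y, hY, rfl⟩) hti
  exact ((Set.finite_range fun Y : Fin n → Finset α => ⨅ j, (∑ a ∈ Y j, v a) / t j).subset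
    (by rintro _ ⟨Y, _, rfl⟩; exact ⟨Y, rfl⟩)).bddAbove

theorem mul_le_wmms_of_proportional {n : ℕ} {v : Fin n → ℝ} {t : Fin n → ℝ} {c : ℝ}
    (ht : ∀ j, 0 < t j) (hv : ∀ j, v j = c * t j) (i : Fin n) :
    t i * c ≤ wmms v n t i := by
  have : Nonempty (Fin n) := ⟨i⟩
  have hc : (⨅ j, (∑ a ∈ ({j} : Finset (Fin n)), v a) / t j) = c := by
    simp only [sum_singleton, hv, mul_div_cancel_right₀ _ (ht _).ne']
    exact ciInf_const
  simpa only [hc] using le_wmms v t i (ht i).le (isPartition_singleton n)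

end Shares

theorem stmt14 :
    ∃ (M : Type) (iF : Fintype M) (iD : DecidableEq M) (v : M → ℝ) (t : Fin 2 → ℝ),
      (∀ a, 0 ≤ v a) ∧ (∀ i, 0 < t i) ∧ (∑ i, t i = 1) ∧
      ∀ i : Fin 2, ∀ l d : ℕ, 1 ≤ l → l ≤ d → (l : ℝ) / d ≤ t i →
        @mmsValR M iF iD (fun S => ∑ a ∈ S, v a) l d < @wmms M iF iD v 2 t i := by
  have hv : ∀ a, (0 : ℝ) ≤ ![40, 60] a := fun a => by fin_cases a <;> norm_num
  have hshare : ∀ i, ![2 / 5, 3 / 5] i * 100 ≤ wmms ![(40 : ℝ), 60] 2 ![2 / 5, 3 / 5] i :=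
    mul_le_wmms_of_proportional (fun j => by fin_cases j <;> norm_num)
      (fun j => by fin_cases j <;> norm_num)
  refine ⟨Fin 2, inferInstance, inferInstance, ![40, 60], ![2 / 5, 3 / 5], hv,
    fun i => by fin_cases i <;> norm_num, by norm_num [Fin.sum_univ_two],
    fun i l d hl _ hlt => ?_⟩
  rw [div_le_iff₀ (by exact_mod_cast (by omega : 0 < d))] at hlt
  obtain ⟨T, hT, hTv⟩ : ∃ T : Finset (Fin 2),
      l + #T ≤ d ∧ ∑ a ∈ Tᶜ, ![(40 : ℝ), 60] a < ![2 / 5, 3 / 5] i * 100 := by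
    fin_cases i
    · have : 5 * l ≤ 2 * d := by
        have : (l : ℝ) ≤ 2 / 5 * d := by simpa using hlt
        exact_mod_cast (by linarith : 5 * (l : ℝ) ≤ 2 * d)
      exact ⟨univ, by simp only [card_univ, Fintype.card_fin]; omega, by norm_num⟩
    · have : 5 * l ≤ 3 * d := by
        have : (l : ℝ) ≤ 3 / 5 * d := by simpa using hlt
        exact_mod_cast (by linarith : 5 * (l : ℝ) ≤ 3 * d)
      exact ⟨{1}, by simp only [card_singleton]; omega, by
        rw [show ({1} : Finset (Fin 2))ᶜ = {0} by decide]; norm_num⟩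
  exact (mmsValR_le_sum_compl hv T hT).trans_lt (hTv.trans_le (hshare i))
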